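/- arXiv:1812.11363 — 3 statements merged into one kernel-verified Lean document; each statement's English description precedes it below -/
import Mathlib

section
/- Let k be a field of characteristic ≠ 2, L/k a quadratic Galois extension with Galois group generated by σ, and X ⊂ P⁴ the zero set of a homogeneous cubic polynomial F with coefficients in k. If X has a point with coordinates in L, then X has a point with coordinates in k. -/
/-!
Let `σ` generate `Gal(L/k)`. On the line through `x` and `σ x` the cubic restricts to a binary
cubic form vanishing at both points, `F(t x + s σx) = t s (b t + σ(b) s)`, and the points
`t x + σ(t) σx` of this line are `σ`-invariant, hence `k`-rational. If `x` and `σ x` are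
independent, any `t ≠ 0` with `b t + σ(b t) = 0` gives a nonzero rational zero of `F`; otherwise
the whole line is the span of `x`, on which `F` vanishes, and it suffices to choose `t` so that
the point is nonzero.
-/

open MvPolynomial Finset

namespace MvPolynomial.IsHomogeneous

theorem exists_eval_fin_two_eq_sum {R : Type*} [CommSemiring R] {G : MvPolynomial (Fin 2) R}
    {n : ℕ} (hG : G.IsHomogeneous n) :
    ∃ c : ℕ → R, ∀ t s : R, eval ![t, s] G = ∑ i ∈ range (n + 1), c i * t ^ i * s ^ (n - i) := by
  refine ⟨fun i => ∑ d ∈ G.support with d 0 = i, coeff d G, fun t s => ?_⟩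
  have hdeg : ∀ d ∈ G.support, d 0 + d 1 = n := fun d hd => by
    simpa [Finsupp.weight_apply, Finsupp.sum_fintype, Fin.sum_univ_two] using
      hG (mem_support_iff.mp hd)
  rw [eval_eq', ← sum_fiberwise_of_maps_to (g := fun d => d 0) (t := range (n + 1))
    fun d hd => mem_range_succ_iff.mpr (by have := hdeg d hd; omega)]
  refine sum_congr rfl fun i _ => ?_
  rw [sum_mul, sum_mul]
  refine sum_congr rfl fun d hd => ?_
  obtain ⟨hdG, rfl⟩ := mem_filter.mp hd
  rw [Fin.prod_univ_two, ← hdeg d hdG]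
  simp [mul_assoc]

theorem exists_aeval_add_smul_eq_sum {R S ι : Type*} [CommSemiring R] [CommSemiring S]
    [Algebra R S] {F : MvPolynomial ι R} {n : ℕ} (hF : F.IsHomogeneous n) (u v : ι → S) :
    ∃ c : ℕ → S, ∀ t s : S,
      MvPolynomial.aeval (t • u + s • v) F = ∑ i ∈ range (n + 1), c i * t ^ i * s ^ (n - i) := by
  let ℓ : ι → MvPolynomial (Fin 2) S := fun i => C (u i) * X 0 + C (v i) * X 1
  have hℓ : ∀ i, (ℓ i).IsHomogeneous 1 := fun i =>
    ((isHomogeneous_X _ _).C_mul _).add ((isHomogeneous_X _ _).C_mul _)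
  obtain ⟨c, hc⟩ := exists_eval_fin_two_eq_sum (by simpa using hF.aeval ℓ hℓ)
  refine ⟨c, fun t s => ?_⟩
  rw [← hc, map_aeval, aeval_def]
  congr 1
  · exact RingHom.ext fun r => by
      simp only [RingHom.comp_apply, MvPolynomial.algebraMap_apply, eval_C]
  · ext i
    simp [ℓ, mul_comm]

end MvPolynomial.IsHomogeneous

section QuadraticDescent

variable {k L ι : Type*} [Field k] [Field L] [Algebra k L] {σ : L ≃ₐ[k] L}

theorem exists_ne_zero_apply_eq_neg (hσ : Function.Involutive σ) (hσ1 : σ ≠ 1) :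
    ∃ δ : L, δ ≠ 0 ∧ σ δ = -δ := by
  obtain ⟨θ, hθ⟩ : ∃ θ, σ θ ≠ θ := DFunLike.ne_iff.mp hσ1
  exact ⟨θ - σ θ, sub_ne_zero.mpr (Ne.symm hθ), by rw [map_sub, hσ θ, neg_sub]⟩

theorem exists_add_apply_ne_zero (hσ1 : σ ≠ 1) : ∃ τ : L, τ + σ τ ≠ 0 := by
  by_contra! h
  obtain ⟨θ, hθ⟩ : ∃ θ, σ θ ≠ θ := DFunLike.ne_iff.mp hσ1
  have two_eq_zero : (2 : L) = 0 := by simpa [one_add_one_eq_two] using h 1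
  exact hθ (by linear_combination h θ - θ * two_eq_zero)

theorem exists_ne_zero_mul_add_apply_eq_zero (hσ : Function.Involutive σ) (hσ1 : σ ≠ 1)
    (b : L) : ∃ t : L, t ≠ 0 ∧ b * t + σ (b * t) = 0 := by
  rcases eq_or_ne b 0 with rfl | hb
  · exact ⟨1, one_ne_zero, by simp⟩
  obtain ⟨δ, hδ, hσδ⟩ := exists_ne_zero_apply_eq_neg hσ hσ1
  exact ⟨δ / b, div_ne_zero hδ hb, by rw [mul_div_cancel₀ δ hb, hσδ, add_neg_cancel]⟩

theorem apply_aeval_add_smul_comp (hσ : Function.Involutive σ) (F : MvPolynomial ι k)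
    (x : ι → L) (t s : L) :
    σ (aeval (t • x + s • (σ ∘ x)) F) = aeval (σ s • x + σ t • (σ ∘ x)) F := by
  rw [← AlgEquiv.coe_toAlgHom, comp_aeval_apply]
  congr 1
  ext i
  simp [hσ (x i), add_comm]

theorem exists_aeval_add_smul_comp_eq (hσ : Function.Involutive σ) (hσ1 : σ ≠ 1)
    {F : MvPolynomial ι k} (hF : F.IsHomogeneous 3) {x : ι → L} (hxF : aeval x F = 0) :
    ∃ b : L, ∀ t s : L, aeval (t • x + s • (σ ∘ x)) F = t * s * (b * t + σ b * s) := by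
  obtain ⟨c, hc⟩ := hF.exists_aeval_add_smul_eq_sum x (σ ∘ x)
  simp only [sum_range_succ, sum_range_zero] at hc
  have hc3 : c 3 = 0 := by simpa [hxF] using (hc 1 0).symm
  have hc0 : c 0 = 0 := by
    have h := apply_aeval_add_smul_comp hσ F x 1 0
    rw [hc, hc] at h
    simpa [hc3] using h.symm
  have hline : ∀ t s : L, aeval (t • x + s • (σ ∘ x)) F = c 1 * t * s ^ 2 + c 2 * t ^ 2 * s :=
    fun t s => by rw [hc, hc0, hc3]; ring
  have hconj : ∀ t s : L, σ (c 1 * t * s ^ 2 + c 2 * t ^ 2 * s)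
      = c 1 * σ s * σ t ^ 2 + c 2 * σ s ^ 2 * σ t := fun t s => by
    rw [← hline, ← hline, apply_aeval_add_smul_comp hσ]
  obtain ⟨θ, hθ⟩ : ∃ θ, σ θ ≠ θ := DFunLike.ne_iff.mp hσ1
  have hconj_one := hconj 1 1
  have hconj_θ := hconj 1 (σ θ)
  simp only [map_add, map_mul, map_pow, map_one, hσ θ] at hconj_one hconj_θ
  have hθ0 : θ ≠ 0 := by rintro rfl; simp at hθ
  have hθ1 : θ ≠ 1 := by rintro rfl; simp at hθ
  have hb : σ (c 2) = c 1 := by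
    have : (σ (c 2) - c 1) * (θ * (θ - 1)) = 0 := by
      linear_combination θ ^ 2 * hconj_one - hconj_θ
    simpa [sub_eq_zero, hθ0, hθ1] using this
  refine ⟨c 2, fun t s => ?_⟩
  rw [hline, hb]
  ring

theorem exists_ne_zero_eval_eq_zero_of_apply_eq
    (hfix : ∀ a : L, σ a = a → a ∈ Set.range (algebraMap k L)) {F : MvPolynomial ι k}
    {p : ι → L} (hp : p ≠ 0) (hσp : ∀ i, σ (p i) = p i) (hpF : aeval p F = 0) :
    ∃ y : ι → k, y ≠ 0 ∧ eval y F = 0 := by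
  choose y hy using fun i => hfix _ (hσp i)
  obtain rfl : algebraMap k L ∘ y = p := funext hy
  refine ⟨y, fun hy0 => hp (by simp [hy0]), ?_⟩
  simpa using (aeval_algebraMap_eq_zero_iff (B := L) y F).mp hpF

theorem exists_ne_zero_eval_eq_zero_of_involutive (hσ : Function.Involutive σ) (hσ1 : σ ≠ 1)
    (hfix : ∀ a : L, σ a = a → a ∈ Set.range (algebraMap k L)) {F : MvPolynomial ι k}
    (hF : F.IsHomogeneous 3) {x : ι → L} (hx : x ≠ 0) (hxF : aeval x F = 0) :
    ∃ y : ι → k, y ≠ 0 ∧ eval y F = 0 := by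
  obtain ⟨b, hb⟩ := exists_aeval_add_smul_comp_eq hσ hσ1 hF hxF
  have hfixed : ∀ t : L, ∀ i, σ ((t • x + σ t • (σ ∘ x)) i) = (t • x + σ t • (σ ∘ x)) i :=
    fun t i => by simp [hσ t, hσ (x i), add_comm]
  by_cases hprop : ∃ μ : L, σ ∘ x = μ • x
  · obtain ⟨μ, hμ⟩ := hprop
    obtain ⟨i, hi⟩ := Function.ne_iff.mp hx
    obtain ⟨τ, hτ⟩ := exists_add_apply_ne_zero hσ1
    set t := τ / x i
    have hp : t • x + σ t • (σ ∘ x) = (t + σ t * μ) • x + (0 : L) • (σ ∘ x) := by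
      rw [hμ, zero_smul, add_zero, smul_smul, add_smul]
    refine exists_ne_zero_eval_eq_zero_of_apply_eq hfix (Function.ne_iff.mpr ⟨i, ?_⟩)
      (hfixed t) ?_
    · simp only [Pi.add_apply, Pi.smul_apply, Function.comp_apply, smul_eq_mul]
      rwa [← map_mul, div_mul_cancel₀ τ hi]
    · rw [hp, hb, mul_zero, zero_mul]
  · push Not at hprop
    obtain ⟨t, ht, hbt⟩ := exists_ne_zero_mul_add_apply_eq_zero hσ hσ1 b
    refine exists_ne_zero_eval_eq_zero_of_apply_eq hfix (p := t • x + σ t • (σ ∘ x))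
      (fun h => hprop (-(t / σ t)) ?_) (hfixed t) ?_
    · have hσt : σ t ≠ 0 := (map_ne_zero σ).mpr ht
      ext j
      have hj := congrFun h j
      simp only [Pi.add_apply, Pi.smul_apply, Function.comp_apply, smul_eq_mul,
        Pi.zero_apply] at hj ⊢
      field_simp
      linear_combination hj
    · rw [hb, ← map_mul, hbt, mul_zero]

end QuadraticDescent

theorem IsGalois.exists_involutive_of_finrank_eq_two {k L : Type*} [Field k] [Field L]
    [Algebra k L] [IsGalois k L] (h : Module.finrank k L = 2) :
    ∃ σ : L ≃ₐ[k] L, Function.Involutive σ ∧ σ ≠ 1 ∧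
      ∀ a : L, σ a = a → a ∈ Set.range (algebraMap k L) := by
  have : FiniteDimensional k L := Module.finite_of_finrank_eq_succ h
  have hcard : Nat.card (L ≃ₐ[k] L) = 2 := by rw [IsGalois.card_aut_eq_finrank, h]
  obtain ⟨σ, hσ1, hσ⟩ := (Nat.card_eq_two_iff' (1 : L ≃ₐ[k] L)).mp hcard
  have hσσ : σ * σ = 1 := by rw [← sq, ← hcard, pow_card_eq_one']
  refine ⟨σ, fun a => by simpa using DFunLike.congr_fun hσσ a, hσ1, fun a ha => ?_⟩
  refine (IsGalois.mem_range_algebraMap_iff_fixed a).mpr fun τ => ?_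
  by_cases hτ : τ = 1
  · simp [hτ]
  · rwa [hσ τ hτ]

theorem cubic_point_descends_quadratic_ext_general (k L : Type*) [Field k] [Field L]
    [Algebra k L] [IsGalois k L]
    (hdim : Module.finrank k L = 2)
    (F : MvPolynomial (Fin 5) k) (hF : F.IsHomogeneous 3)
    (x : Fin 5 → L) (hx : x ≠ 0)
    (hxF : eval x (MvPolynomial.map (algebraMap k L) F) = 0) :
    ∃ y : Fin 5 → k, y ≠ 0 ∧ eval y F = 0 := by
  obtain ⟨σ, hσ, hσ1, hfix⟩ := IsGalois.exists_involutive_of_finrank_eq_two hdim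
  rw [eval_map, ← aeval_def] at hxF
  exact exists_ne_zero_eval_eq_zero_of_involutive hσ hσ1 hfix hF hx hxF

/-- If a cubic hypersurface in P⁴ over a field `k` of characteristic ≠ 2 has a
point over a quadratic Galois extension `L/k`, then it has a `k`-point. -/
theorem cubic_point_descends_quadratic_ext (k L : Type*) [Field k] [Field L]
    [Algebra k L] [IsGalois k L] (hchar : ringChar k ≠ 2)
    (hdim : Module.finrank k L = 2)
    (F : MvPolynomial (Fin 5) k) (hF : F.IsHomogeneous 3)
    (x : Fin 5 → L) (hx : x ≠ 0)
    (hxF : eval x (MvPolynomial.map (algebraMap k L) F) = 0) :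
    ∃ y : Fin 5 → k, y ≠ 0 ∧ eval y F = 0 :=
  cubic_point_descends_quadratic_ext_general k L hdim F hF x hx hxF
end

section
/- Let k be a field of characteristic ≠ 2 and X ⊂ P⁴ a cubic hypersurface defined over k. If L/k is a finite extension obtained as a tower of quadratic extensions and X has an L-point, then X has a k-point. -/
/-!
Over a quadratic extension `F/E` choose `θ ∈ F \ E`, so that a point of the cubic `G` over
`F` is `x = b θ + a` with `a, b` rational. The cubic polynomial `g(t) = G(t b + a)` over `E`
vanishes at `θ`, hence is divisible by the quadratic minimal polynomial of `θ`. If `G(b) ≠ 0`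
then `g` has degree three, and its remaining linear factor gives a rational root `t`, hence the
rational point `t b + a`; it is nonzero, since otherwise `x = (θ - t) b` and homogeneity would
force `G(b) = 0`. If `b = 0` or `G(b) = 0` a rational point is already at hand. Descending one
step at a time along the tower gives a `k`-point.
-/

open MvPolynomial

namespace Polynomial

theorem coeff_prod_of_natDegree_le' {R ι : Type*} [CommSemiring R] (s : Finset ι)
    (f : ι → R[X]) (n : ι → ℕ) (h : ∀ i ∈ s, (f i).natDegree ≤ n i) :
    (∏ i ∈ s, f i).coeff (∑ i ∈ s, n i) = ∏ i ∈ s, (f i).coeff (n i) := by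
  induction s using Finset.cons_induction with
  | empty => simp
  | cons a s ha ih =>
    simp only [Finset.prod_cons, Finset.sum_cons, Finset.forall_mem_cons] at h ⊢
    rw [coeff_mul_add_eq_of_natDegree_le h.1
      ((natDegree_prod_le _ _).trans (Finset.sum_le_sum h.2)), ih h.2]

theorem natDegree_linear_pow_le {R : Type*} [CommSemiring R] (a b : R) (m : ℕ) :
    ((C a * X + C b) ^ m).natDegree ≤ m :=
  (natDegree_pow_le_of_le m natDegree_linear_le).trans_eq (mul_one m)

theorem coeff_linear_pow {R : Type*} [CommSemiring R] (a b : R) (m : ℕ) :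
    ((C a * X + C b) ^ m).coeff m = a ^ m := by
  simpa using coeff_pow_of_natDegree_le (m := m) (natDegree_linear_le (a := a) (b := b))

theorem exists_isRoot_of_dvd_of_natDegree_eq_succ {K : Type*} [Field K] {p q : K[X]}
    (hpq : p ∣ q) (hq : q.natDegree = p.natDegree + 1) : ∃ t, q.IsRoot t := by
  obtain ⟨r, rfl⟩ := hpq
  have hpr : p * r ≠ 0 := by
    rintro h
    simp [h] at hq
  have hr : r.degree = 1 := by
    rw [natDegree_mul (left_ne_zero_of_mul hpr) (right_ne_zero_of_mul hpr)] at hq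
    exact (degree_eq_iff_natDegree_eq_of_pos one_pos).2 (by omega)
  obtain ⟨t, ht⟩ := exists_root_of_degree_eq_one hr
  exact ⟨t, root_mul.2 (Or.inr ht)⟩

end Polynomial

section QuadraticExtension

variable {E F : Type*} [Field E] [Field F] [Algebra E F]

theorem exists_notMem_range_algebraMap (hrank : 1 < Module.finrank E F) :
    ∃ θ : F, θ ∉ (algebraMap E F).range := by
  by_contra! h
  have : Module.finrank E F ≤ 1 := finrank_le_one 1 fun w => by
    obtain ⟨c, hc⟩ := h w
    exact ⟨c, by rw [Algebra.smul_def, mul_one, ← hc]⟩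
  omega

theorem minpoly_natDegree_eq_two (hrank : Module.finrank E F = 2) {θ : F}
    (hθ : θ ∉ (algebraMap E F).range) : (minpoly E θ).natDegree = 2 :=
  have : FiniteDimensional E F := Module.finite_of_finrank_eq_succ hrank
  le_antisymm (hrank ▸ minpoly.natDegree_le θ)
    ((minpoly.two_le_natDegree_iff (IsIntegral.of_finite E θ)).2 hθ)

theorem exists_eq_algebraMap_mul_add_algebraMap (hrank : Module.finrank E F = 2) {θ : F}
    (hθ : θ ∉ (algebraMap E F).range) (x : F) :
    ∃ a b : E, x = algebraMap E F b * θ + algebraMap E F a := by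
  have : FiniteDimensional E F := Module.finite_of_finrank_eq_succ hrank
  have hli : LinearIndependent E ![1, θ] := (LinearIndependent.pair_iff' one_ne_zero).2
    fun a ha => hθ ⟨a, by simpa [Algebra.smul_def] using ha⟩
  have hx : x ∈ Submodule.span E (Set.range ![1, θ]) := by
    rw [hli.span_eq_top_of_card_eq_finrank' (by simp [hrank])]
    trivial
  obtain ⟨a, b, hab⟩ := Submodule.mem_span_pair.1 (by simpa [Matrix.range_cons] using hx)
  exact ⟨b, a, by rw [← hab, Algebra.smul_def, Algebra.smul_def, mul_one]⟩

end QuadraticExtension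

namespace MvPolynomial

variable {R σ : Type*} [CommSemiring R] {φ : MvPolynomial σ R} {n : ℕ}

/-- A nonzero zero of a form is a rational point of the projective hypersurface it defines. -/
def HasNontrivialZero (φ : MvPolynomial σ R) : Prop :=
  ∃ x : σ → R, x ≠ 0 ∧ eval x φ = 0

theorem HasNontrivialZero.map {S : Type*} [CommSemiring S] (h : φ.HasNontrivialZero)
    {f : R →+* S} (hf : Function.Injective f) : (φ.map f).HasNontrivialZero := by
  obtain ⟨x, hx, hφx⟩ := h
  have hfx : f ∘ x ≠ 0 := by
    contrapose! hx
    funext i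
    exact hf (by simpa using congrFun hx i)
  exact ⟨f ∘ x, hfx, by rw [← map_eval, hφx, map_zero]⟩

theorem HasNontrivialZero.map_algebraMap {k A B : Type*} [CommSemiring k] [CommSemiring A]
    [CommSemiring B] [Algebra k A] [Algebra k B] {G : MvPolynomial σ k}
    (h : (G.map (algebraMap k A)).HasNontrivialZero) {f : A →ₐ[k] B}
    (hf : Function.Injective f) : (G.map (algebraMap k B)).HasNontrivialZero := by
  simpa [map_map] using h.map hf

theorem IsHomogeneous.eval_smul (hφ : φ.IsHomogeneous n) (c : R) (x : σ → R) :
    eval (c • x) φ = c ^ n * eval x φ := by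
  simp only [eval_eq, Finset.mul_sum]
  refine Finset.sum_congr rfl fun d hd => ?_
  simp only [Pi.smul_apply, smul_eq_mul, mul_pow, Finset.prod_mul_distrib,
    Finset.prod_pow_eq_pow_sum, ← hφ.degree_eq_sum_deg_support hd]
  ring

theorem IsHomogeneous.eval_eq_zero_of_eval_map_smul_eq_zero {S : Type*} [CommSemiring S]
    [NoZeroDivisors S] (hφ : φ.IsHomogeneous n) {f : R →+* S} (hf : Function.Injective f)
    {c : S} (hc : c ≠ 0) {b : σ → R} (h : eval (c • (f ∘ b)) (φ.map f) = 0) :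
    eval b φ = 0 := by
  rw [(hφ.map f).eval_smul, ← map_eval] at h
  exact hf (((mul_eq_zero.1 h).resolve_left (pow_ne_zero n hc)).trans (map_zero f).symm)

noncomputable def restrictLine (φ : MvPolynomial σ R) (a b : σ → R) : Polynomial R :=
  aeval (fun i => Polynomial.C (b i) * Polynomial.X + Polynomial.C (a i)) φ

theorem aeval_restrictLine {A : Type*} [CommSemiring A] [Algebra R A] (a b : σ → R) (s : A) :
    Polynomial.aeval s (φ.restrictLine a b) =
      aeval (fun i => algebraMap R A (b i) * s + algebraMap R A (a i)) φ := by
  simp [restrictLine, comp_aeval_apply]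

theorem eval_restrictLine (a b : σ → R) (t : R) :
    (φ.restrictLine a b).eval t = eval (t • b + a) φ := by
  rw [← Polynomial.coe_aeval_eq_eval, aeval_restrictLine]
  simp [mul_comm]
  rfl

theorem restrictLine_eq_sum (a b : σ → R) :
    φ.restrictLine a b = ∑ d ∈ φ.support, Polynomial.C (φ.coeff d) *
      ∏ i ∈ d.support, (Polynomial.C (b i) * Polynomial.X + Polynomial.C (a i)) ^ d i := by
  simp [restrictLine, aeval_eq_eval₂Hom, eval₂_eq, Polynomial.algebraMap_eq]

theorem IsHomogeneous.natDegree_restrictLine_le (hφ : φ.IsHomogeneous n) (a b : σ → R) :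
    (φ.restrictLine a b).natDegree ≤ n := by
  rw [restrictLine_eq_sum]
  refine Polynomial.natDegree_sum_le_of_forall_le _ _ fun d hd => ?_
  refine (Polynomial.natDegree_C_mul_le _ _).trans ?_
  rw [hφ.degree_eq_sum_deg_support hd]
  exact (Polynomial.natDegree_prod_le _ _).trans
    (Finset.sum_le_sum fun i _ => Polynomial.natDegree_linear_pow_le _ _ _)

theorem IsHomogeneous.coeff_restrictLine (hφ : φ.IsHomogeneous n) (a b : σ → R) :
    (φ.restrictLine a b).coeff n = eval b φ := by
  rw [restrictLine_eq_sum, Polynomial.finsetSum_coeff, eval_eq]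
  refine Finset.sum_congr rfl fun d hd => ?_
  rw [Polynomial.coeff_C_mul, hφ.degree_eq_sum_deg_support hd,
    Polynomial.coeff_prod_of_natDegree_le' _ _ _
      fun i _ => Polynomial.natDegree_linear_pow_le _ _ _]
  simp only [Polynomial.coeff_linear_pow]

theorem IsHomogeneous.hasNontrivialZero_of_map_of_finrank_eq_two {E F : Type*} [Field E]
    [Field F] [Algebra E F] (hrank : Module.finrank E F = 2) {G : MvPolynomial σ E}
    (hG : G.IsHomogeneous 3) (h : (G.map (algebraMap E F)).HasNontrivialZero) :
    G.HasNontrivialZero := by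
  obtain ⟨x, hx0, hx⟩ := h
  obtain ⟨θ, hθ⟩ := exists_notMem_range_algebraMap (E := E) (F := F) (by omega)
  choose a b hab using fun i => exists_eq_algebraMap_mul_add_algebraMap hrank hθ (x i)
  have hdescend {c : F} {v : σ → E} (hc : c ≠ 0) (hxv : x = c • (algebraMap E F ∘ v)) :
      eval v G = 0 :=
    hG.eval_eq_zero_of_eval_map_smul_eq_zero (algebraMap E F).injective hc (hxv ▸ hx)
  by_cases hb : b = 0
  · have hxa : x = (1 : F) • (algebraMap E F ∘ a) := by
      funext i
      simp [hab, hb]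
    refine ⟨a, ?_, hdescend one_ne_zero hxa⟩
    rintro rfl
    exact hx0 (by simpa using hxa)
  by_cases hGb : eval b G = 0
  · exact ⟨b, hb, hGb⟩
  have hg : (G.restrictLine a b).natDegree = (minpoly E θ).natDegree + 1 :=
    minpoly_natDegree_eq_two hrank hθ ▸ le_antisymm (hG.natDegree_restrictLine_le a b)
      (Polynomial.le_natDegree_of_ne_zero (by rwa [hG.coeff_restrictLine]))
  have hgθ : Polynomial.aeval θ (G.restrictLine a b) = 0 := by
    rwa [aeval_restrictLine, aeval_def, eval₂_eq_eval_map, ← _root_.funext hab]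
  obtain ⟨t, ht⟩ :=
    Polynomial.exists_isRoot_of_dvd_of_natDegree_eq_succ (minpoly.dvd E θ hgθ) hg
  refine ⟨t • b + a, fun hy => hGb (hdescend (c := θ - algebraMap E F t) ?_ ?_), by
    rw [← eval_restrictLine]; exact ht⟩
  · exact sub_ne_zero.2 fun h => hθ ⟨t, h.symm⟩
  · funext i
    have hyi := congrArg (algebraMap E F) (congrFun hy i)
    simp only [Pi.add_apply, Pi.smul_apply, smul_eq_mul, Pi.zero_apply, map_add, map_mul,
      map_zero] at hyi
    simp only [hab, Pi.smul_apply, Function.comp_apply, smul_eq_mul]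
    linear_combination hyi

end MvPolynomial

theorem IntermediateField.hasNontrivialZero_map_of_relfinrank_eq_two {σ k L : Type*} [Field k]
    [Field L] [Algebra k L] {E E' : IntermediateField k L} (hle : E ≤ E')
    (hrank : E.relfinrank E' = 2) {G : MvPolynomial σ k} (hG : G.IsHomogeneous 3)
    (h : (G.map (algebraMap k E')).HasNontrivialZero) :
    (G.map (algebraMap k E)).HasNontrivialZero := by
  refine (hG.map _).hasNontrivialZero_of_map_of_finrank_eq_two (F := extendScalars hle)
    (relfinrank_eq_finrank_of_le hle ▸ hrank) ?_
  rw [MvPolynomial.map_map, ← IsScalarTower.algebraMap_eq]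
  exact h.map_algebraMap (f := AlgHom.id k E') Function.injective_id

theorem cubic_point_descends_quadratic_tower_general (k L : Type*) [Field k] [Field L]
    [Algebra k L]
    (n : ℕ) (K : Fin (n + 1) → IntermediateField k L)
    (h0 : K 0 = ⊥) (hlast : K (Fin.last n) = ⊤)
    (hle : ∀ i : Fin n, K i.castSucc ≤ K i.succ)
    (hdeg : ∀ i : Fin n,
      Subfield.relfinrank (K i.castSucc).toSubfield (K i.succ).toSubfield = 2)
    (F : MvPolynomial (Fin 5) k) (hF : F.IsHomogeneous 3)
    (x : Fin 5 → L) (hx : x ≠ 0)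
    (hxF : eval x (MvPolynomial.map (algebraMap k L) F) = 0) :
    ∃ y : Fin 5 → k, y ≠ 0 ∧ eval y F = 0 := by
  have hK (i : Fin (n + 1)) : (F.map (algebraMap k (K i))).HasNontrivialZero := by
    induction i using Fin.reverseInduction with
    | last =>
      rw [hlast]
      exact HasNontrivialZero.map_algebraMap ⟨x, hx, hxF⟩
        (f := IntermediateField.topEquiv.symm.toAlgHom) IntermediateField.topEquiv.symm.injective
    | cast i ih =>
      exact IntermediateField.hasNontrivialZero_map_of_relfinrank_eq_two (hle i) (hdeg i) hF ih
  have hk := (h0 ▸ hK 0).map_algebraMap (f := (IntermediateField.botEquiv k L).toAlgHom)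
    (IntermediateField.botEquiv k L).injective
  rwa [Algebra.algebraMap_self, map_id] at hk

/-- If a cubic hypersurface in P⁴ over a field `k` of characteristic ≠ 2 has a
point over a finite extension `L/k` that is a tower of quadratic extensions,
then it has a `k`-point. -/
theorem cubic_point_descends_quadratic_tower (k L : Type*) [Field k] [Field L]
    [Algebra k L] (hchar : ringChar k ≠ 2)
    (n : ℕ) (K : Fin (n + 1) → IntermediateField k L)
    (h0 : K 0 = ⊥) (hlast : K (Fin.last n) = ⊤)
    (hle : ∀ i : Fin n, K i.castSucc ≤ K i.succ)
    (hdeg : ∀ i : Fin n,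
      Subfield.relfinrank (K i.castSucc).toSubfield (K i.succ).toSubfield = 2)
    (F : MvPolynomial (Fin 5) k) (hF : F.IsHomogeneous 3)
    (x : Fin 5 → L) (hx : x ≠ 0)
    (hxF : eval x (MvPolynomial.map (algebraMap k L) F) = 0) :
    ∃ y : Fin 5 → k, y ≠ 0 ∧ eval y F = 0 :=
  cubic_point_descends_quadratic_tower_general k L n K h0 hlast hle hdeg F hF x hx hxF
end

section
/- Let F ≤ S₆ be a subgroup containing a point-stabilizer copy of A₅ (i.e., a subgroup isomorphic to A₅ fixing one of the six letters). Then F is isomorphic to one of A₅, S₅, A₆, or S₆. -/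
/-!
Write `|F| = 60 · [F : A]`. If `[S₆ : F] ≤ 2`, then `F` is `S₆` or its unique subgroup of index
two, `A₆`. Otherwise `[F : A] ≤ 4`, so the kernel of the action of `F` on `F ⧸ A` lies in `A` and
has index at most `4! < |F|`; since `A` is simple, this kernel is `A`, i.e. `A ⊴ F`. Hence `F`
permutes the fixed points of `A`. A group of permutations fixing two of six points has order at
most `4! < 60`, so `a` is the only fixed point of `A` and `F ≤ Stab(a) ≅ S₅`; comparing orders,
`F = A` or `F = Stab(a)`.
-/

open Equiv Equiv.Perm MulAction Nat

namespace Subgroup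

variable {G : Type*} [Group G]

theorem index_normalCore_dvd_factorial (H : Subgroup G) [H.FiniteIndex] :
    H.normalCore.index ∣ H.index ! := by
  rw [normalCore_eq_ker, index_ker, index_eq_card, ← Nat.card_perm]
  exact card_subgroup_dvd_card (toPermHom G (G ⧸ H)).range

theorem normal_of_factorial_index_lt [Finite G] {H : Subgroup G} [IsSimpleGroup H]
    (h : H.index ! < Nat.card G) : H.Normal := by
  rcases (H.normalCore_normal.subgroupOf H).eq_bot_or_eq_top with hbot | htop
  · have hcore : H.normalCore = ⊥ :=
      (subgroupOf_eq_bot.mp hbot).eq_bot_of_le H.normalCore_le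
    have := Nat.le_of_dvd (factorial_pos _) H.index_normalCore_dvd_factorial
    rw [hcore, index_bot] at this
    omega
  · exact le_antisymm H.normalCore_le (subgroupOf_eq_top.mp htop) ▸ H.normalCore_normal

end Subgroup

theorem MulAction.smul_fixed_of_mem_normalizer {G α : Type*} [Group G] [MulAction G α]
    {A : Subgroup G} {f : G} (hf : f ∈ Subgroup.normalizer (A : Set G)) {a : α}
    (ha : ∀ g ∈ A, g • a = a) : ∀ g ∈ A, g • f • a = f • a := by
  intro g hg
  have := ha _ ((Subgroup.mem_normalizer_iff'').mp hf g |>.mp hg)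
  rwa [mul_smul, mul_smul, inv_smul_eq_iff] at this

namespace Equiv.Perm

variable {α : Type*} [Fintype α] [DecidableEq α]

theorem mem_range_ofSubtype_iff_forall_fixed {p : α → Prop} [DecidablePred p] {g : Perm α} :
    g ∈ (ofSubtype : Perm (Subtype p) →* Perm α).range ↔ ∀ x, ¬ p x → g x = x := by
  rw [mem_range_ofSubtype_iff]
  simp [Set.subset_def, not_imp_comm]

theorem card_le_factorial_of_forall_fixed {A : Subgroup (Perm α)} (s : Finset α)
    (hs : ∀ g ∈ A, ∀ x ∈ s, g x = x) : Nat.card A ≤ (Fintype.card α - s.card)! := by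
  have hA : A ≤ (ofSubtype : Perm {x // x ∉ s} →* Perm α).range := fun g hg =>
    mem_range_ofSubtype_iff_forall_fixed.mpr fun x hx => hs g hg x (not_not.mp hx)
  calc Nat.card A ≤ Nat.card (ofSubtype : Perm {x // x ∉ s} →* Perm α).range :=
        Subgroup.card_le_of_le hA
    _ = (Fintype.card α - s.card)! := by
        rw [← Nat.card_congr (MonoidHom.ofInjective ofSubtype_injective).toEquiv, Nat.card_perm,
          Nat.card_eq_fintype_card, Fintype.card_subtype_compl, Fintype.card_coe]

theorem stabilizer_eq_range_ofSubtype (a : α) :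
    stabilizer (Perm α) a = (ofSubtype : Perm {x // x ≠ a} →* Perm α).range := by
  ext g
  rw [mem_range_ofSubtype_iff_forall_fixed]
  simp

noncomputable def stabilizerMulEquivPermFin {n : ℕ} (a : α) (h : Fintype.card α = n + 1) :
    stabilizer (Perm α) a ≃* Perm (Fin n) :=
  (MulEquiv.subgroupCongr (stabilizer_eq_range_ofSubtype a)).trans <|
    (MonoidHom.ofInjective ofSubtype_injective).symm.trans <|
      permCongrHom (Fintype.equivFinOfCardEq (by simp [Fintype.card_subtype_compl, h]))

theorem le_stabilizer_of_isSimpleGroup {A F : Subgroup (Perm α)} (hAF : A ≤ F) [IsSimpleGroup A]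
    (hA : (Fintype.card α - 2)! < Nat.card A) (hidx : (A.relIndex F)! < Nat.card F) {a : α}
    (ha : ∀ g ∈ A, g a = a) : F ≤ stabilizer (Perm α) a := by
  have : IsSimpleGroup (A.subgroupOf F) := (Subgroup.subgroupOfEquivOfLe hAF).isSimpleGroup
  have hnormal : (A.subgroupOf F).Normal := Subgroup.normal_of_factorial_index_lt hidx
  intro f hf
  rw [mem_stabilizer_iff, Perm.smul_def]
  by_contra hfa
  have hpair : ({a, f a} : Finset α).card = 2 := Finset.card_pair (Ne.symm hfa)
  have hle := card_le_factorial_of_forall_fixed {a, f a} fun g hg x hx => by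
    rcases Finset.mem_insert.mp hx with rfl | hx
    · exact ha g hg
    rw [Finset.mem_singleton.mp hx]
    exact smul_fixed_of_mem_normalizer
      ((Subgroup.normal_subgroupOf_iff_le_normalizer hAF).mp hnormal hf) ha g hg
  rw [hpair] at hle
  omega

end Equiv.Perm

theorem eq_or_eq_stabilizer_or_eq_alternatingGroup_or_eq_top {A F : Subgroup (Perm (Fin 6))}
    (hAF : A ≤ F) [IsSimpleGroup A] (hA : Nat.card A = 60) {a : Fin 6} (ha : ∀ g ∈ A, g a = a) :
    F = A ∨ F = stabilizer (Perm (Fin 6)) a ∨ F = alternatingGroup (Fin 6) ∨ F = ⊤ := by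
  have hF : F.index * Nat.card F = 720 := by
    rw [F.index_mul_card, Nat.card_perm, Nat.card_fin]; rfl
  have hFA : A.relIndex F * 60 = Nat.card F := by
    rw [← hA, ← Nat.card_congr (Subgroup.subgroupOfEquivOfLe hAF).toEquiv]
    exact (A.subgroupOf F).index_mul_card
  obtain h1 | h2 | h3 : F.index = 1 ∨ F.index = 2 ∨ 3 ≤ F.index := by
    have := F.index_ne_zero_of_finite
    omega
  · exact Or.inr (Or.inr (Or.inr (Subgroup.index_eq_one.mp h1)))
  · exact Or.inr (Or.inr (Or.inl (eq_alternatingGroup_of_index_eq_two h2)))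
  have hF_le : Nat.card F ≤ 240 := by nlinarith
  obtain h1 | h2 : A.relIndex F = 1 ∨ 2 ≤ A.relIndex F := by
    have : 0 < Nat.card F := Nat.card_pos
    omega
  · exact Or.inl (le_antisymm (Subgroup.relIndex_eq_one.mp h1) hAF)
  have hstab : Nat.card (stabilizer (Perm (Fin 6)) a) = 120 := by
    rw [Nat.card_congr (stabilizerMulEquivPermFin a (Fintype.card_fin 6)).toEquiv,
      Nat.card_perm, Nat.card_fin]; rfl
  have hidx : (A.relIndex F)! < Nat.card F :=
    calc (A.relIndex F)! ≤ 4! := Nat.factorial_le (by omega)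
      _ < Nat.card F := by rw [show (4 : ℕ)! = 24 from rfl]; omega
  have hle := le_stabilizer_of_isSimpleGroup hAF (by rw [hA]; decide) hidx ha
  exact Or.inr (Or.inl (Subgroup.eq_of_le_of_card_ge hle (by omega)))

/-- A subgroup of S₆ containing a point-stabilizing copy of A₅ is isomorphic to
A₅, S₅, A₆ or S₆. -/
theorem overgroups_of_standard_A5 (F : Subgroup (Equiv.Perm (Fin 6)))
    (h : ∃ (a : Fin 6) (A : Subgroup (Equiv.Perm (Fin 6))), A ≤ F ∧
      Nonempty (A ≃* alternatingGroup (Fin 5)) ∧ ∀ g ∈ A, g a = a) :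
    Nonempty (F ≃* alternatingGroup (Fin 5)) ∨ Nonempty (F ≃* Equiv.Perm (Fin 5)) ∨
      Nonempty (F ≃* alternatingGroup (Fin 6)) ∨ Nonempty (F ≃* Equiv.Perm (Fin 6)) := by
  obtain ⟨a, A, hAF, ⟨e⟩, ha⟩ := h
  have := e.isSimpleGroup
  have hA : Nat.card A = 60 := by
    rw [Nat.card_congr e.toEquiv, nat_card_alternatingGroup, Nat.card_fin]; rfl
  rcases eq_or_eq_stabilizer_or_eq_alternatingGroup_or_eq_top hAF hA ha with rfl | rfl | rfl | rfl
  · exact Or.inl ⟨e⟩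
  · exact Or.inr (Or.inl ⟨stabilizerMulEquivPermFin a (Fintype.card_fin 6)⟩)
  · exact Or.inr (Or.inr (Or.inl ⟨MulEquiv.refl _⟩))
  · exact Or.inr (Or.inr (Or.inr ⟨Subgroup.topEquiv⟩))
end
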